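/- For 0 ≤ k ≤ n−m and r, s ≥ 0, C(k+m,k) · G_{a,b}(n,k+m;r+s) = Σ_{i=k}^{n−m} C(n,i) · G_{a,b}(i,k;r) · G_{a,b}(n−i,m;s). -/

import Mathlib

/-!
Both sides, as functions of `(n, k, m)`, satisfy the recurrence
`X(n+1,k,m) = X(n,k-1,m) + X(n,k,m-1) + (a n + b (k+m) + (a+b)(r+s)) X(n,k,m)`
and agree at `n = 0`. For the left side this is the recurrence of `G` combined with Pascal's rule
for `C(k+m,k)`. For the right side it is the Leibniz rule for binomial convolutions: the weights
`a i + b k + (a+b) r` and `a j + b m + (a+b) s` of the two factors add up because `i + j = n`.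
-/

open Finset

/-- The generalized r-Lah numbers `G_{a,b}(n,k;r)`. -/
def genLah {R : Type*} [CommRing R] (a b : R) (r : ℕ) : ℕ → ℕ → R
  | 0, 0 => 1
  | 0, _ + 1 => 0
  | n + 1, 0 => (a * ((n : R) + (r : R)) + b * (r : R)) * genLah a b r n 0
  | n + 1, k + 1 => genLah a b r n k +
      (a * (n : R) + b * ((k : R) + 1) + (a + b) * (r : R)) * genLah a b r n (k + 1)

section

variable {R : Type*} [CommRing R]

def SatisfiesPascalRec (w X : ℕ → ℕ → ℕ → R) : Prop :=
  ∀ n k m, X (n + 1) k m = (if k = 0 then 0 else X n (k - 1) m) +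
    (if m = 0 then 0 else X n k (m - 1)) + w n k m * X n k m

theorem SatisfiesPascalRec.ext {w X Y : ℕ → ℕ → ℕ → R} (hX : SatisfiesPascalRec w X)
    (hY : SatisfiesPascalRec w Y) (h0 : X 0 = Y 0) : X = Y := by
  funext n
  induction n with
  | zero => exact h0
  | succ n ih => funext k m; rw [hX, hY, ih]

variable (a b : R)

theorem genLah_succ (r n k : ℕ) :
    genLah a b r (n + 1) k = (if k = 0 then 0 else genLah a b r n (k - 1)) +
      (a * n + b * k + (a + b) * r) * genLah a b r n k := by
  cases k with
  | zero => simp only [genLah, if_true, zero_add, Nat.cast_zero]; ring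
  | succ k => simp [genLah]

theorem genLah_eq_zero_of_lt {r n k : ℕ} (h : n < k) : genLah a b r n k = 0 := by
  induction n generalizing k with
  | zero => obtain ⟨k, rfl⟩ := Nat.exists_eq_add_of_lt h; rfl
  | succ n ih =>
    obtain ⟨k, rfl⟩ := Nat.exists_eq_add_of_lt (Nat.zero_lt_of_lt h)
    rw [zero_add, genLah, ih (by omega), ih (by omega), mul_zero, add_zero]

theorem satisfiesPascalRec_choose_mul_genLah (t : ℕ) :
    SatisfiesPascalRec (fun n k m => a * n + b * (k + m) + (a + b) * t)
      (fun n k m => ((k + m).choose k : R) * genLah a b t n (k + m)) := by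
  intro n k m
  beta_reduce
  rw [genLah_succ]
  rcases k with _ | k <;> rcases m with _ | m
  · simp
  · simp only [zero_add, Nat.choose_zero_right, if_true, Nat.add_sub_cancel]
    push_cast; ring
  · simp only [add_zero, Nat.choose_self, if_true, Nat.add_sub_cancel]
    push_cast; ring
  · rw [show k + 1 + (m + 1) = k + (m + 1) + 1 by omega, Nat.choose_succ_succ]
    simp only [Nat.add_sub_cancel, add_eq_zero, one_ne_zero, and_false, if_false,
      show k + 1 + m = k + (m + 1) by omega]
    push_cast; ring

def lahConv (r s n k m : ℕ) : R :=
  ∑ ij ∈ antidiagonal n, (n.choose ij.1 : R) * (genLah a b r ij.1 k * genLah a b s ij.2 m)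

theorem lahConv_zero (r s : ℕ) :
    lahConv a b r s 0 = fun k m => ((k + m).choose k : R) * genLah a b (r + s) 0 (k + m) := by
  funext k m
  rcases k with _ | k <;> rcases m with _ | m <;> simp [lahConv, genLah]

theorem satisfiesPascalRec_lahConv (r s : ℕ) :
    SatisfiesPascalRec (fun n k m => a * n + b * (k + m) + (a + b) * ((r + s : ℕ) : R))
      (lahConv a b r s) := by
  intro n k m
  have term : ∀ ij ∈ antidiagonal n,
      (n.choose ij.1 : R) * (genLah a b r ij.1 k * genLah a b s (ij.2 + 1) m) +
        (n.choose ij.2 : R) * (genLah a b r (ij.1 + 1) k * genLah a b s ij.2 m) =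
      (if k = 0 then 0 else
          (n.choose ij.1 : R) * (genLah a b r ij.1 (k - 1) * genLah a b s ij.2 m)) +
        (if m = 0 then 0 else
          (n.choose ij.1 : R) * (genLah a b r ij.1 k * genLah a b s ij.2 (m - 1))) +
        (a * n + b * (k + m) + (a + b) * ((r + s : ℕ) : R)) *
          ((n.choose ij.1 : R) * (genLah a b r ij.1 k * genLah a b s ij.2 m)) := by
    rintro ⟨i, j⟩ hij
    rw [HasAntidiagonal.mem_antidiagonal] at hij
    subst hij
    rw [← Nat.choose_symm_of_eq_add rfl, genLah_succ, genLah_succ]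
    push_cast
    split_ifs <;> ring
  rw [lahConv, sum_antidiagonal_choose_succ_mul (fun i j => genLah a b r i k * genLah a b s j m),
    ← sum_add_distrib, sum_congr rfl term, sum_add_distrib, sum_add_distrib, ← mul_sum,
    ← ite_zero_sum, ← ite_zero_sum]
  rfl

theorem lahConv_eq_sum_Icc (r s n k m : ℕ) :
    lahConv a b r s n k m =
      ∑ i ∈ Icc k (n - m), (n.choose i : R) * genLah a b r i k * genLah a b s (n - i) m := by
  rw [lahConv, Nat.sum_antidiagonal_eq_sum_range_succ
    (fun i j => (n.choose i : R) * (genLah a b r i k * genLah a b s j m))]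
  simp only [← mul_assoc]
  refine (sum_subset (fun i hi => ?_) fun i hi hni => ?_).symm
  · rw [mem_Icc] at hi
    rw [mem_range]
    omega
  · rw [mem_range] at hi
    rw [mem_Icc, not_and_or, not_le, not_le] at hni
    rcases hni with hik | hmi
    · rw [genLah_eq_zero_of_lt a b hik, mul_zero, zero_mul]
    · rw [genLah_eq_zero_of_lt a b (show n - i < m by omega), mul_zero]

end

theorem genLah_convolution_general {R : Type*} [CommRing R] (a b : R) (r s n m k : ℕ) :
    ((k + m).choose k : R) * genLah a b (r + s) n (k + m) =
      ∑ i ∈ Icc k (n - m), (n.choose i : R) * genLah a b r i k * genLah a b s (n - i) m := by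
  have key := (satisfiesPascalRec_choose_mul_genLah a b (r + s)).ext
    (satisfiesPascalRec_lahConv a b r s) (lahConv_zero a b r s).symm
  rw [congr_fun₃ key n k m, lahConv_eq_sum_Icc]

theorem genLah_convolution {R : Type*} [CommRing R] (a b : R) (r s n m k : ℕ)
    (h : k + m ≤ n) :
    ((k + m).choose k : R) * genLah a b (r + s) n (k + m) =
      ∑ i ∈ Icc k (n - m), (n.choose i : R) * genLah a b r i k * genLah a b s (n - i) m :=
  genLah_convolution_general a b r s n m k
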